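/- arXiv:2202.10528 — 2 statements merged into one kernel-verified Lean document; each statement's English description precedes it below -/
import Mathlib

section
/- Define c_{n,m} = 4^{−(n+m)} binom(2n, n) binom(2m, m) for integers n, m ≥ 0, so that (1−z)^{−1/2}(1−w)^{−1/2} = Σ_{n,m ≥ 0} c_{n,m} z^n w^m for |z|, |w| < 1 and hence Σ_{n,m ≥ 0} c_{n,m} z^n z̄^m = |1−z|^{−1} for z ∈ ℂ with |z| < 1. There exists a constant C > 0 such that for every integer K ≥ 0 and every z ∈ ℂ with |z| < 1: | Σ_{(n,m): n+m ≥ K} c_{n,m} z^n z̄^m | ≤ C |z|^K |1−z|^{−1}. -/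
/-!
Write `aₙ = C(2n, n) / 4ⁿ = (-1)ⁿ C(-1/2, n)`, so that `c_{n,m} = aₙ aₘ` and `f(w) = ∑ aₙ wⁿ` is the
binomial series of `(1 - w)^{-1/2}`; the first two claims follow, using `f(z̄) = conj f(z)`.

For the tail, split `{n + m ≥ K}` into `n < K` and `n ≥ K`: the sum becomes
`∑_{n<K} aₙ zⁿ T_{K-n}(z̄) + T_K(z) f(z̄)`, where `T_M(w) = ∑_{k≥M} a_k w^k`. As `(aₙ)` decreases,
Abel summation gives `|1 - w| |T_M(w)| ≤ 2 a_M |w|^M`, which together with the Chu–Vandermonde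
identity `∑_{n≤K} aₙ a_{K-n} = 1` bounds the first part by `2 |z|^K / |1 - z|`. For the second,
`|T_M(w)| ≤ 5 |w|^M |1 - w|^{-1/2}`: if `|1 - w| ≥ 1 / (2(M+1))` this is Abel summation with
`a_M ≤ (M+1)^{-1/2}`; otherwise `|w|^M ≥ 1/2`, and `T_M = f - ∑_{n<M} aₙ wⁿ` with
`∑_{n<M} aₙ ≤ 2√M`.
-/

/-- The Taylor coefficients of `(1-z)^{-1/2}(1-w)^{-1/2}`:
`c_{n,m} = 4^{-(n+m)} C(2n,n) C(2m,m)`. -/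
noncomputable def cCoef (n m : ℕ) : ℝ :=
  ((4 : ℝ) ^ (n + m))⁻¹ * (Nat.choose (2 * n) n) * (Nat.choose (2 * m) m)

open Finset

theorem ascPochhammer_eval_inv_two {F : Type*} [Field F] [CharZero F] (n : ℕ) :
    (ascPochhammer F n).eval (2⁻¹ : F) = n.factorial * Nat.centralBinom n / 4 ^ n := by
  induction n with
  | zero => simp
  | succ n ih =>
    have h : ((n + 1 : ℕ) : F) * (n + 1).centralBinom = 2 * (2 * n + 1) * n.centralBinom := by
      exact_mod_cast Nat.succ_mul_centralBinom_succ n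
    rw [ascPochhammer_succ_eval, ih, Nat.factorial_succ]
    push_cast at h ⊢
    field_simp
    linear_combination (-2 * n.factorial * 4 ^ n : F) * h

theorem multichoose_inv_two {F : Type*} [Field F] [CharZero F] (n : ℕ) :
    Ring.multichoose (2⁻¹ : F) n = Nat.centralBinom n / 4 ^ n := by
  have hfac : (n.factorial : F) ≠ 0 := by exact_mod_cast n.factorial_ne_zero
  rw [← mul_right_inj' hfac, ← nsmul_eq_mul, Ring.factorial_nsmul_multichoose_eq_ascPochhammer,
    Polynomial.ascPochhammer_smeval_eq_eval, ascPochhammer_eval_inv_two, mul_div_assoc]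

/-- Chu–Vandermonde for `-1/2 + -1/2 = -1`, with `C(-r, n) = (-1)ⁿ multichoose r n`. -/
theorem sum_antidiagonal_multichoose_inv_two {F : Type*} [Field F] [CharZero F] (n : ℕ) :
    ∑ p ∈ antidiagonal n, Ring.multichoose (2⁻¹ : F) p.1 * Ring.multichoose (2⁻¹ : F) p.2 = 1 := by
  have h := Ring.add_choose_eq n (Commute.refl (-2⁻¹ : F))
  rw [show (-2⁻¹ : F) + -2⁻¹ = -1 by ring, Ring.choose_neg', Ring.multichoose_one] at h
  simp only [Ring.choose_neg', smul_mul_smul_comm] at h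
  rw [sum_congr rfl fun p hp => by
    rw [← Int.negOnePow_add, ← Nat.cast_add, mem_antidiagonal.mp hp], ← smul_sum] at h
  exact (smul_left_cancel _ h).symm

noncomputable def invSqrtCoeff (n : ℕ) : ℝ := Nat.centralBinom n / 4 ^ n

theorem invSqrtCoeff_zero : invSqrtCoeff 0 = 1 := by simp [invSqrtCoeff]

theorem invSqrtCoeff_pos (n : ℕ) : 0 < invSqrtCoeff n := by
  have := Nat.centralBinom_pos n
  unfold invSqrtCoeff
  positivity

theorem invSqrtCoeff_succ_mul (n : ℕ) :
    invSqrtCoeff (n + 1) * (2 * n + 2) = invSqrtCoeff n * (2 * n + 1) := by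
  have h : ((n + 1 : ℕ) : ℝ) * (n + 1).centralBinom = 2 * (2 * n + 1) * n.centralBinom := by
    exact_mod_cast Nat.succ_mul_centralBinom_succ n
  unfold invSqrtCoeff
  push_cast at h
  field_simp
  linear_combination 2 * 4 ^ n * h

theorem antitone_invSqrtCoeff : Antitone invSqrtCoeff := by
  refine antitone_nat_of_succ_le fun n =>
    le_of_mul_le_mul_right ?_ (by positivity : (0 : ℝ) < 2 * n + 2)
  rw [invSqrtCoeff_succ_mul]
  nlinarith [invSqrtCoeff_pos n]

theorem invSqrtCoeff_le_one (n : ℕ) : invSqrtCoeff n ≤ 1 :=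
  invSqrtCoeff_zero ▸ antitone_invSqrtCoeff n.zero_le

theorem succ_mul_invSqrtCoeff_sq_le_one (n : ℕ) : (n + 1) * invSqrtCoeff n ^ 2 ≤ 1 := by
  induction n with
  | zero => simp [invSqrtCoeff_zero]
  | succ n ih =>
    push_cast
    set N : ℝ := (n : ℝ)
    have e : (invSqrtCoeff (n + 1) * (2 * N + 2)) ^ 2 = (invSqrtCoeff n * (2 * N + 1)) ^ 2 := by
      rw [invSqrtCoeff_succ_mul]
    have key : (N + 1 + 1) * invSqrtCoeff (n + 1) ^ 2 * ((N + 1) * (2 * N + 2) ^ 2) ≤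
        1 * ((N + 1) * (2 * N + 2) ^ 2) := by
      calc (N + 1 + 1) * invSqrtCoeff (n + 1) ^ 2 * ((N + 1) * (2 * N + 2) ^ 2)
          = (N + 2) * (2 * N + 1) ^ 2 * ((N + 1) * invSqrtCoeff n ^ 2) := by
            linear_combination (N + 1) * (N + 2) * e
        _ ≤ (N + 2) * (2 * N + 1) ^ 2 := mul_le_of_le_one_right (by positivity) ih
        _ ≤ 1 * ((N + 1) * (2 * N + 2) ^ 2) := by nlinarith [Nat.cast_nonneg (α := ℝ) n]
    exact le_of_mul_le_mul_right key (by positivity)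

theorem invSqrtCoeff_le_two_mul_sqrt_sub (n : ℕ) :
    invSqrtCoeff n ≤ 2 * (√(n + 1) - √n) := by
  have hs : √(n + 1 : ℝ) ^ 2 = n + 1 := Real.sq_sqrt (by positivity)
  have hs' : √(n : ℝ) ^ 2 = n := Real.sq_sqrt (by positivity)
  have hpos : 0 < √(n + 1 : ℝ) := Real.sqrt_pos.mpr (by positivity)
  have hcoeff : invSqrtCoeff n * √(n + 1) ≤ 1 := by
    nlinarith [succ_mul_invSqrtCoeff_sq_le_one n, invSqrtCoeff_pos n]
  have hamgm : 1 ≤ 2 * (√(n + 1) - √n) * √(n + 1) := by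
    nlinarith [sq_nonneg (√(n + 1 : ℝ) - √n)]
  exact le_of_mul_le_mul_right (hcoeff.trans hamgm) hpos

theorem sum_range_invSqrtCoeff_le (M : ℕ) : ∑ n ∈ range M, invSqrtCoeff n ≤ 2 * √M := by
  calc ∑ n ∈ range M, invSqrtCoeff n ≤ ∑ n ∈ range M, 2 * (√((n + 1 : ℕ) : ℝ) - √n) :=
        sum_le_sum fun n _ => by exact_mod_cast invSqrtCoeff_le_two_mul_sqrt_sub n
    _ = 2 * √M := by rw [← mul_sum, sum_range_sub (fun n => √(n : ℝ))]; simp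

theorem sum_range_invSqrtCoeff_mul_le_one (K : ℕ) :
    ∑ n ∈ range K, invSqrtCoeff n * invSqrtCoeff (K - n) ≤ 1 := by
  have h : ∑ n ∈ range (K + 1), invSqrtCoeff n * invSqrtCoeff (K - n) = 1 := by
    simpa only [Nat.sum_antidiagonal_eq_sum_range_succ_mk, multichoose_inv_two, invSqrtCoeff]
      using sum_antidiagonal_multichoose_inv_two (F := ℝ) K
  rw [sum_range_succ] at h
  nlinarith [invSqrtCoeff_pos K, invSqrtCoeff_pos (K - K)]

theorem cCoef_eq_mul (n m : ℕ) : cCoef n m = invSqrtCoeff n * invSqrtCoeff m := by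
  rw [cCoef, invSqrtCoeff, invSqrtCoeff, ← Nat.centralBinom_eq_two_mul_choose,
    ← Nat.centralBinom_eq_two_mul_choose, pow_add, mul_inv]
  ring

theorem Antitone.summable_sub_succ_and_tsum_le {c : ℕ → ℝ} (hc : Antitone c) (hc0 : ∀ n, 0 ≤ c n) :
    Summable (fun k => c k - c (k + 1)) ∧ ∑' k, (c k - c (k + 1)) ≤ c 0 := by
  have hnonneg (k : ℕ) : 0 ≤ c k - c (k + 1) := sub_nonneg.mpr (hc k.le_succ)
  have hpartial (n : ℕ) : ∑ k ∈ range n, (c k - c (k + 1)) ≤ c 0 := by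
    rw [sum_range_sub']
    linarith [hc0 n]
  exact ⟨summable_of_sum_range_le hnonneg hpartial, Real.tsum_le_of_sum_range_le hnonneg hpartial⟩

theorem norm_one_sub_mul_tsum_le_of_antitone {c : ℕ → ℝ} (hc : Antitone c) (hc0 : ∀ n, 0 ≤ c n)
    {w : ℂ} (hw : ‖w‖ < 1) : ‖(1 - w) * ∑' k, (c k : ℂ) * w ^ k‖ ≤ 2 * c 0 := by
  obtain ⟨hd, hd_le⟩ := hc.summable_sub_succ_and_tsum_le hc0
  have hS : Summable fun k => (c k : ℂ) * w ^ k := by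
    refine .of_norm_bounded ((summable_geometric_of_lt_one (norm_nonneg w) hw).mul_left (c 0))
      fun k => ?_
    rw [norm_mul, norm_pow, Complex.norm_real, Real.norm_of_nonneg (hc0 k)]
    exact mul_le_mul_of_nonneg_right (hc k.zero_le) (by positivity)
  have hshift : Summable fun k => (c (k + 1) : ℂ) * w ^ (k + 1) := (summable_nat_add_iff 1).mpr hS
  have hS' : Summable fun k => (c k : ℂ) * w ^ (k + 1) :=
    (hS.mul_left w).congr fun k => by ring
  have hmul : w * ∑' k, (c k : ℂ) * w ^ k = ∑' k, (c k : ℂ) * w ^ (k + 1) := by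
    rw [← hS.tsum_mul_left]
    exact tsum_congr fun k => by ring
  have habel : (1 - w) * ∑' k, (c k : ℂ) * w ^ k =
      c 0 + ∑' k, ((c (k + 1) - c k : ℝ) : ℂ) * w ^ (k + 1) := by
    simp only [Complex.ofReal_sub, sub_mul]
    rw [hshift.tsum_sub hS', ← hmul, one_mul, hS.tsum_eq_zero_add, pow_zero, mul_one]
    ring
  have hrest : ‖∑' k, ((c (k + 1) - c k : ℝ) : ℂ) * w ^ (k + 1)‖ ≤ c 0 := by
    refine (tsum_of_norm_bounded hd.hasSum fun k => ?_).trans hd_le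
    rw [norm_mul, norm_pow, Complex.norm_real, Real.norm_eq_abs, abs_sub_comm,
      abs_of_nonneg (sub_nonneg.mpr (hc k.le_succ))]
    exact mul_le_of_le_one_right (sub_nonneg.mpr (hc k.le_succ)) (pow_le_one₀ (norm_nonneg w) hw.le)
  calc _ ≤ ‖(c 0 : ℂ)‖ + ‖∑' k, ((c (k + 1) - c k : ℝ) : ℂ) * w ^ (k + 1)‖ :=
        habel ▸ norm_add_le _ _
    _ ≤ c 0 + c 0 := by rw [Complex.norm_real, Real.norm_of_nonneg (hc0 0)]; linarith
    _ = 2 * c 0 := by ring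

section TailSplit

variable {R : Type*} [NormedRing R] [CompleteSpace R] {f g : ℕ → R}

theorem tsum_indicator_Ici_eq_tsum_nat_add (hg : Summable g) (M : ℕ) :
    ∑' m, (Set.Ici M).indicator g m = ∑' k, g (k + M) := by
  rw [← (hg.indicator _).sum_add_tsum_nat_add M, sum_eq_zero fun m hm => ?_, zero_add]
  · exact tsum_congr fun k => Set.indicator_of_mem (Nat.le_add_left M k) g
  · exact Set.indicator_of_notMem (Set.notMem_Ici.mpr (mem_range.mp hm)) g

theorem tsum_subtype_le_add_mul_eq (hf : Summable (‖f ·‖)) (hg : Summable (‖g ·‖)) (K : ℕ) :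
    ∑' q : {q : ℕ × ℕ // K ≤ q.1 + q.2}, f q.1.1 * g q.1.2 =
      ∑ n ∈ range K, f n * ∑' k, g (k + (K - n)) + (∑' k, f (k + K)) * ∑' m, g m := by
  set s : Set (ℕ × ℕ) := {q | K ≤ q.1 + q.2}
  have hF : Summable (s.indicator fun q => f q.1 * g q.2) :=
    (summable_mul_of_summable_norm hf hg).indicator s
  have hrow (n : ℕ) : ∑' m, s.indicator (fun q => f q.1 * g q.2) (n, m) =
      f n * ∑' k, g (k + (K - n)) := by
    rw [← tsum_indicator_Ici_eq_tsum_nat_add hg.of_norm, ← (hg.of_norm.indicator _).tsum_mul_left]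
    refine tsum_congr fun m => ?_
    simp only [s, Set.indicator_apply, Set.mem_ofPred_eq, Set.mem_Ici]
    split_ifs <;> first | rfl | (exfalso; omega) | simp
  refine (tsum_subtype s (fun q => f q.1 * g q.2)).trans ?_
  rw [hF.tsum_prod' hF.prod_factor, tsum_congr hrow,
    ← (hF.prod.congr hrow).sum_add_tsum_nat_add K,
    ← ((summable_nat_add_iff K).mpr hf.of_norm).tsum_mul_right]
  congr 1
  exact tsum_congr fun k => by rw [show K - (k + K) = 0 by omega]; simp

end TailSplit

section Series

variable {w : ℂ}

theorem norm_invSqrtCoeff_mul_pow (n : ℕ) :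
    ‖(invSqrtCoeff n : ℂ) * w ^ n‖ = invSqrtCoeff n * ‖w‖ ^ n := by
  rw [norm_mul, norm_pow, Complex.norm_real, Real.norm_of_nonneg (invSqrtCoeff_pos n).le]

theorem summable_norm_invSqrtCoeff_mul_pow (hw : ‖w‖ < 1) :
    Summable fun n => ‖(invSqrtCoeff n : ℂ) * w ^ n‖ :=
  .of_nonneg_of_le (fun _ => norm_nonneg _)
    (fun n => norm_invSqrtCoeff_mul_pow n ▸
      mul_le_of_le_one_left (by positivity) (invSqrtCoeff_le_one n))
    (summable_geometric_of_lt_one (norm_nonneg w) hw)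

theorem hasSum_invSqrtCoeff (hw : ‖w‖ < 1) :
    HasSum (fun n => (invSqrtCoeff n : ℂ) * w ^ n) ((1 - w) ^ (-(1 / 2) : ℂ)) := by
  have h := (Complex.one_div_one_sub_cpow_hasFPowerSeriesOnBall_zero 2⁻¹).hasSum
    (y := w) (by simpa [← ofReal_norm] using hw)
  have hcoeff (n : ℕ) : Ring.choose ((2⁻¹ : ℂ) + n - 1) n = invSqrtCoeff n := by
    rw [← Ring.multichoose_eq, multichoose_inv_two, invSqrtCoeff]
    push_cast
    rfl
  simp only [FormalMultilinearSeries.ofScalars_apply_eq, smul_eq_mul, zero_add, hcoeff] at h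
  rwa [Complex.cpow_neg, ← one_div, one_div 2]

theorem ne_one_of_norm_lt_one (hw : ‖w‖ < 1) : w ≠ 1 :=
  ne_of_apply_ne norm (by simpa using hw.ne)

theorem norm_one_sub_pos (hw : ‖w‖ < 1) : 0 < ‖1 - w‖ :=
  norm_pos_iff.mpr (sub_ne_zero.mpr (ne_one_of_norm_lt_one hw).symm)

theorem norm_one_sub_cpow_neg_half (hw : w ≠ 1) :
    ‖(1 - w) ^ (-(1 / 2) : ℂ)‖ = (√‖1 - w‖)⁻¹ := by
  rw [Complex.norm_cpow_of_ne_zero (sub_ne_zero.mpr hw.symm)]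
  norm_num [Real.sqrt_eq_rpow, Real.rpow_neg]

theorem one_sub_conj_cpow_neg_half (hw : ‖w‖ < 1) :
    (1 - starRingEnd ℂ w) ^ (-(1 / 2) : ℂ) = starRingEnd ℂ ((1 - w) ^ (-(1 / 2) : ℂ)) := by
  refine (hasSum_invSqrtCoeff (by rwa [Complex.norm_conj])).unique ?_
  simpa using Complex.hasSum_conj'.mpr (hasSum_invSqrtCoeff hw)

end Series

noncomputable def invSqrtTail (M : ℕ) (w : ℂ) : ℂ :=
  ∑' k, (invSqrtCoeff (k + M) : ℂ) * w ^ (k + M)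

section Tail

variable {w : ℂ}

theorem invSqrtTail_eq (hw : ‖w‖ < 1) (M : ℕ) :
    invSqrtTail M w = (1 - w) ^ (-(1 / 2) : ℂ) - ∑ n ∈ range M, (invSqrtCoeff n : ℂ) * w ^ n := by
  rw [← (hasSum_invSqrtCoeff hw).tsum_eq,
    ← (summable_norm_invSqrtCoeff_mul_pow hw).of_norm.sum_add_tsum_nat_add M, invSqrtTail]
  ring

theorem norm_one_sub_mul_norm_invSqrtTail_le (hw : ‖w‖ < 1) (M : ℕ) :
    ‖1 - w‖ * ‖invSqrtTail M w‖ ≤ 2 * invSqrtCoeff M * ‖w‖ ^ M := by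
  have hshift : invSqrtTail M w = w ^ M * ∑' k, (invSqrtCoeff (k + M) : ℂ) * w ^ k := by
    rw [invSqrtTail, ← tsum_mul_left]
    exact tsum_congr fun k => by ring
  have habel := norm_one_sub_mul_tsum_le_of_antitone (antitone_invSqrtCoeff.comp_monotone
    (add_left_mono (a := M))) (fun k => (invSqrtCoeff_pos (k + M)).le) hw
  rw [hshift, ← norm_mul, mul_left_comm, norm_mul, norm_pow, mul_comm (‖w‖ ^ M)]
  exact mul_le_mul_of_nonneg_right (by simpa using habel) (by positivity)

theorem norm_invSqrtTail_mul_sqrt_le (hw : ‖w‖ < 1) (M : ℕ) :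
    ‖invSqrtTail M w‖ * √‖1 - w‖ ≤ 5 * ‖w‖ ^ M := by
  set d := ‖1 - w‖
  have hd : 0 < d := norm_one_sub_pos hw
  have hs : √d ^ 2 = d := Real.sq_sqrt hd.le
  have hs0 : 0 < √d := Real.sqrt_pos.mpr hd
  by_cases hfar : 1 ≤ 2 * (M + 1) * d
  · -- far from `1`, Abel summation wins
    have habel := norm_one_sub_mul_norm_invSqrtTail_le hw M
    have hcoeff : invSqrtCoeff M ≤ 2 * √d := by
      nlinarith [succ_mul_invSqrtCoeff_sq_le_one M, invSqrtCoeff_pos M]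
    nlinarith [norm_nonneg (invSqrtTail M w), pow_nonneg (norm_nonneg w) M]
  · -- close to `1`, `‖w‖ ^ M ≥ 1 / 2` and the partial sums are `O(√M)`
    push Not at hfar
    have hr : 1 - d ≤ ‖w‖ := by
      have := norm_sub_norm_le (1 : ℂ) w
      rw [norm_one] at this
      linarith
    have hpow : 1 / 2 ≤ ‖w‖ ^ M := by
      have hbern := one_add_mul_le_pow (show (-2 : ℝ) ≤ -d by nlinarith) M
      have := pow_le_pow_left₀ (by nlinarith) hr M
      rw [← sub_eq_add_neg] at hbern
      nlinarith
    have hhead : ‖∑ n ∈ range M, (invSqrtCoeff n : ℂ) * w ^ n‖ ≤ 2 * √M := by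
      refine (norm_sum_le _ _).trans
        ((sum_le_sum fun n _ => ?_).trans (sum_range_invSqrtCoeff_le M))
      rw [norm_invSqrtCoeff_mul_pow]
      exact mul_le_of_le_one_right (invSqrtCoeff_pos n).le (pow_le_one₀ (norm_nonneg w) hw.le)
    have hT_le : ‖invSqrtTail M w‖ ≤ (√d)⁻¹ + 2 * √M := by
      rw [← norm_one_sub_cpow_neg_half (ne_one_of_norm_lt_one hw), invSqrtTail_eq hw]
      exact (norm_sub_le _ _).trans (by linarith)
    have hMd : √M * √d ≤ 3 / 4 := by
      rw [← Real.sqrt_mul (by positivity)]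
      exact Real.sqrt_le_iff.mpr ⟨by norm_num, by nlinarith⟩
    calc ‖invSqrtTail M w‖ * √d ≤ ((√d)⁻¹ + 2 * √M) * √d := mul_le_mul_of_nonneg_right hT_le hs0.le
      _ = 1 + 2 * (√M * √d) := by field_simp
      _ ≤ 5 * ‖w‖ ^ M := by linarith

end Tail

section DoubleSeries

variable {z w : ℂ}

theorem cpow_mul_cpow_eq_tsum_cCoef (hz : ‖z‖ < 1) (hw : ‖w‖ < 1) :
    (1 - z) ^ (-(1 / 2) : ℂ) * (1 - w) ^ (-(1 / 2) : ℂ) =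
      ∑' q : ℕ × ℕ, (cCoef q.1 q.2 : ℂ) * z ^ q.1 * w ^ q.2 := by
  rw [← (hasSum_invSqrtCoeff hz).tsum_eq, ← (hasSum_invSqrtCoeff hw).tsum_eq,
    tsum_mul_tsum_of_summable_norm (summable_norm_invSqrtCoeff_mul_pow hz)
      (summable_norm_invSqrtCoeff_mul_pow hw)]
  exact tsum_congr fun q => by rw [cCoef_eq_mul]; push_cast; ring

theorem tsum_cCoef_mul_conj (hz : ‖z‖ < 1) :
    ∑' q : ℕ × ℕ, (cCoef q.1 q.2 : ℂ) * z ^ q.1 * (starRingEnd ℂ z) ^ q.2 = ((‖1 - z‖ : ℂ))⁻¹ := by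
  rw [← cpow_mul_cpow_eq_tsum_cCoef hz (by rwa [Complex.norm_conj]), one_sub_conj_cpow_neg_half hz,
    Complex.mul_conj, Complex.normSq_eq_norm_sq,
    norm_one_sub_cpow_neg_half (ne_one_of_norm_lt_one hz), inv_pow, Real.sq_sqrt (norm_nonneg _)]
  push_cast
  rfl

theorem norm_sum_range_mul_invSqrtTail_le (hw : ‖w‖ < 1) (hwz : ‖w‖ ≤ ‖z‖) (K : ℕ) :
    ‖∑ n ∈ range K, (invSqrtCoeff n : ℂ) * z ^ n * invSqrtTail (K - n) w‖ * ‖1 - w‖ ≤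
      2 * ‖z‖ ^ K := by
  have hterm (n : ℕ) (hn : n ∈ range K) :
      ‖(invSqrtCoeff n : ℂ) * z ^ n * invSqrtTail (K - n) w‖ * ‖1 - w‖ ≤
        2 * ‖z‖ ^ K * (invSqrtCoeff n * invSqrtCoeff (K - n)) := by
    have habel := norm_one_sub_mul_norm_invSqrtTail_le hw (K - n)
    have hsplit : ‖z‖ ^ K = ‖z‖ ^ n * ‖z‖ ^ (K - n) := by
      rw [← pow_add, Nat.add_sub_cancel' (mem_range.mp hn).le]
    rw [norm_mul, norm_invSqrtCoeff_mul_pow, hsplit]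
    have := invSqrtCoeff_pos n
    have := invSqrtCoeff_pos (K - n)
    calc invSqrtCoeff n * ‖z‖ ^ n * ‖invSqrtTail (K - n) w‖ * ‖1 - w‖
        = invSqrtCoeff n * ‖z‖ ^ n * (‖1 - w‖ * ‖invSqrtTail (K - n) w‖) := by ring
      _ ≤ invSqrtCoeff n * ‖z‖ ^ n * (2 * invSqrtCoeff (K - n) * ‖z‖ ^ (K - n)) :=
          mul_le_mul_of_nonneg_left (habel.trans (by gcongr)) (by positivity)
      _ = _ := by ring
  calc _ ≤ ∑ n ∈ range K, ‖(invSqrtCoeff n : ℂ) * z ^ n * invSqrtTail (K - n) w‖ * ‖1 - w‖ :=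
        by rw [← sum_mul]; exact mul_le_mul_of_nonneg_right (norm_sum_le _ _) (norm_nonneg _)
    _ ≤ ∑ n ∈ range K, 2 * ‖z‖ ^ K * (invSqrtCoeff n * invSqrtCoeff (K - n)) := sum_le_sum hterm
    _ ≤ 2 * ‖z‖ ^ K := by
        rw [← mul_sum]
        exact mul_le_of_le_one_right (by positivity) (sum_range_invSqrtCoeff_mul_le_one K)

theorem norm_tsum_cCoef_tail_mul_le (hz : ‖z‖ < 1) (K : ℕ) :
    ‖∑' q : {q : ℕ × ℕ // K ≤ q.1 + q.2},
        (cCoef q.1.1 q.1.2 : ℂ) * z ^ q.1.1 * (starRingEnd ℂ z) ^ q.1.2‖ * ‖1 - z‖ ≤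
      7 * ‖z‖ ^ K := by
  set y := starRingEnd ℂ z
  have hy : ‖y‖ = ‖z‖ := Complex.norm_conj z
  have hy1 : ‖1 - y‖ = ‖1 - z‖ := by
    rw [show 1 - y = starRingEnd ℂ (1 - z) by simp [y], Complex.norm_conj]
  have hy' : ‖y‖ < 1 := hy ▸ hz
  have hfactor :
      ∑' q : {q : ℕ × ℕ // K ≤ q.1 + q.2}, (cCoef q.1.1 q.1.2 : ℂ) * z ^ q.1.1 * y ^ q.1.2 =
      ∑' q : {q : ℕ × ℕ // K ≤ q.1 + q.2},
        (invSqrtCoeff q.1.1 : ℂ) * z ^ q.1.1 * ((invSqrtCoeff q.1.2 : ℂ) * y ^ q.1.2) :=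
    tsum_congr fun q => by rw [cCoef_eq_mul]; push_cast; ring
  rw [hfactor, tsum_subtype_le_add_mul_eq (summable_norm_invSqrtCoeff_mul_pow hz)
    (summable_norm_invSqrtCoeff_mul_pow hy') K, (hasSum_invSqrtCoeff hy').tsum_eq]
  change ‖∑ n ∈ range K, (invSqrtCoeff n : ℂ) * z ^ n * invSqrtTail (K - n) y +
    invSqrtTail K z * (1 - y) ^ (-(1 / 2) : ℂ)‖ * ‖1 - z‖ ≤ 7 * ‖z‖ ^ K
  have hhead := norm_sum_range_mul_invSqrtTail_le (z := z) hy' hy.le K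
  have htail := norm_invSqrtTail_mul_sqrt_le hz K
  have hsqrt : (√‖1 - z‖)⁻¹ * ‖1 - z‖ = √‖1 - z‖ := by
    rw [inv_mul_eq_div, Real.div_sqrt]
  calc _ ≤ (‖∑ n ∈ range K, (invSqrtCoeff n : ℂ) * z ^ n * invSqrtTail (K - n) y‖ +
        ‖invSqrtTail K z‖ * ‖(1 - y) ^ (-(1 / 2) : ℂ)‖) * ‖1 - z‖ :=
        mul_le_mul_of_nonneg_right ((norm_add_le _ _).trans_eq (by rw [norm_mul])) (norm_nonneg _)
    _ = ‖∑ n ∈ range K, (invSqrtCoeff n : ℂ) * z ^ n * invSqrtTail (K - n) y‖ * ‖1 - y‖ +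
        ‖invSqrtTail K z‖ * √‖1 - z‖ := by
        rw [norm_one_sub_cpow_neg_half (ne_one_of_norm_lt_one hy'), hy1, add_mul, mul_assoc, hsqrt]
    _ ≤ 7 * ‖z‖ ^ K := by linarith

end DoubleSeries

/-- With `c_{n,m} = 4^{-(n+m)} C(2n,n) C(2m,m)` one has
`(1-z)^{-1/2}(1-w)^{-1/2} = Σ_{n,m≥0} c_{n,m} z^n w^m` for `|z|, |w| < 1`, hence
`Σ_{n,m≥0} c_{n,m} z^n z̄^m = |1-z|⁻¹` for `|z| < 1`; moreover there is `C > 0`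
such that for every `K ≥ 0` and `|z| < 1` the tail over `n+m ≥ K` satisfies
`|Σ_{n+m≥K} c_{n,m} z^n z̄^m| ≤ C |z|^K |1-z|⁻¹`. -/
theorem tail_estimate_riesz_series :
    (∀ z w : ℂ, ‖z‖ < 1 → ‖w‖ < 1 →
      (1 - z) ^ (-(1/2) : ℂ) * (1 - w) ^ (-(1/2) : ℂ)
        = ∑' q : ℕ × ℕ, (cCoef q.1 q.2 : ℂ) * z ^ q.1 * w ^ q.2)
    ∧ (∀ z : ℂ, ‖z‖ < 1 →
      ∑' q : ℕ × ℕ, (cCoef q.1 q.2 : ℂ) * z ^ q.1 * (starRingEnd ℂ z) ^ q.2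
        = ((‖1 - z‖ : ℂ))⁻¹)
    ∧ ∃ C : ℝ, 0 < C ∧ ∀ (K : ℕ) (z : ℂ), ‖z‖ < 1 →
      ‖∑' q : {q : ℕ × ℕ // K ≤ q.1 + q.2},
          (cCoef q.1.1 q.1.2 : ℂ) * z ^ q.1.1 * (starRingEnd ℂ z) ^ q.1.2‖
        ≤ C * ‖z‖ ^ K * (‖1 - z‖)⁻¹ := by
  refine ⟨fun z w hz hw => cpow_mul_cpow_eq_tsum_cCoef hz hw, fun z hz => tsum_cCoef_mul_conj hz,
    7, by norm_num, fun K z hz => ?_⟩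
  rw [← div_eq_mul_inv, le_div_iff₀ (norm_one_sub_pos hz)]
  exact norm_tsum_cCoef_tail_mul_le hz K
end

section
/- Let d ≥ 3 and let V : ℝ^d → ℝ be measurable with finite weak-L^{d/2} quasinorm M := sup_{t > 0} t · |{x ∈ ℝ^d : |V(x)| > t}|^{2/d} < ∞ (|·| denoting Lebesgue measure). Then there exists a constant C = C(d) > 0, independent of V, such that ∫_{ℝ^d} |V| φ² dx ≤ C M ∫_{ℝ^d} |∇φ|² dx for all φ ∈ C_c^∞(ℝ^d). In particular, every weak-L^{d/2} potential is form-bounded with form-bound δ = C M and constant c_δ = 0. -/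
open MeasureTheory

namespace WeakLhalf

open Set ENNReal NNReal

lemma dyadic_bound {b : ℝ} (hb : 1 < b) {g : ℝ → ℝ≥0∞} (hg : Antitone g) :
    ∫⁻ s in Ioi (0:ℝ), g s ≤ ∑' k : ℤ, ENNReal.ofReal (b ^ (k+1) - b ^ k) * g (b ^ k) := by
  have hcover : Ioi (0:ℝ) ⊆ ⋃ k : ℤ, Ioc (b ^ k) (b ^ (k+1)) := by
    intro x hx
    obtain ⟨k, hk⟩ := exists_mem_Ioc_zpow hx hb
    exact mem_iUnion.2 ⟨k, hk⟩
  calc ∫⁻ s in Ioi (0:ℝ), g s ≤ ∫⁻ s in ⋃ k : ℤ, Ioc (b ^ k) (b ^ (k+1)), g s :=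
        lintegral_mono_set hcover
    _ ≤ ∑' k : ℤ, ∫⁻ s in Ioc (b ^ k) (b ^ (k+1)), g s := lintegral_iUnion_le _ _
    _ ≤ ∑' k : ℤ, ENNReal.ofReal (b ^ (k+1) - b ^ k) * g (b ^ k) := by
        refine ENNReal.tsum_le_tsum fun k => ?_
        calc ∫⁻ s in Ioc (b ^ k) (b ^ (k+1)), g s
            ≤ ∫⁻ _ in Ioc (b ^ k) (b ^ (k+1)), g (b ^ k) :=
              setLIntegral_mono' measurableSet_Ioc (fun s hs => hg hs.1.le)
          _ = g (b ^ k) * volume (Ioc (b ^ k) (b ^ (k+1))) := setLIntegral_const _ _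
          _ = ENNReal.ofReal (b ^ (k+1) - b ^ k) * g (b ^ k) := by
              rw [Real.volume_Ioc, mul_comm]

lemma tsum_int_split (f : ℤ → ℝ≥0∞) (k₀ : ℤ) :
    ∑' k : ℤ, f k ≤ (∑' n : ℕ, f (k₀ - n)) + ∑' n : ℕ, f (k₀ + 1 + n) := by
  have h1 : ∑' k : ℤ, f k ≤
      ∑' k : ℤ, ((if k ≤ k₀ then f k else 0) + (if k₀ < k then f k else 0)) := by
    refine ENNReal.tsum_le_tsum fun k => ?_
    by_cases h : k ≤ k₀
    · simp [h, not_lt.2 h]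
    · simp [h, not_le.1 h]
  rw [ENNReal.tsum_add] at h1
  refine h1.trans (add_le_add (le_of_eq ?_) (le_of_eq ?_))
  · rw [← Function.Injective.tsum_eq (g := fun n : ℕ => k₀ - (n:ℤ))
      (fun a b hab => by simp only at hab; omega)
      (f := fun k : ℤ => if k ≤ k₀ then f k else 0)
      (by intro k hk
          simp only [Function.mem_support, ne_eq, ite_eq_right_iff, not_forall] at hk
          obtain ⟨h, -⟩ := hk
          exact ⟨(k₀ - k).toNat, show k₀ - ((k₀ - k).toNat : ℤ) = k by omega⟩)]
    refine tsum_congr fun n => ?_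
    simp [show k₀ - (n:ℤ) ≤ k₀ by omega]
  · rw [← Function.Injective.tsum_eq (g := fun n : ℕ => k₀ + 1 + (n:ℤ))
      (fun a b hab => by simp only at hab; omega)
      (f := fun k : ℤ => if k₀ < k then f k else 0)
      (by intro k hk
          simp only [Function.mem_support, ne_eq, ite_eq_right_iff, not_forall] at hk
          obtain ⟨h, -⟩ := hk
          exact ⟨(k - (k₀ + 1)).toNat, show k₀ + 1 + ((k - (k₀+1)).toNat : ℤ) = k by omega⟩)]
    refine tsum_congr fun n => ?_
    simp [show k₀ < k₀ + 1 + (n:ℤ) by omega]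

lemma tsum_le_geometric {C ρ : ℝ≥0∞} {f : ℕ → ℝ≥0∞} (h : ∀ n, f n ≤ C * ρ ^ n) :
    ∑' n, f n ≤ C * (1 - ρ)⁻¹ := by
  calc ∑' n, f n ≤ ∑' n, C * ρ ^ n := ENNReal.tsum_le_tsum h
    _ = C * (1 - ρ)⁻¹ := by rw [ENNReal.tsum_mul_left, ENNReal.tsum_geometric]

lemma ofReal_two_zpow_pos (k : ℤ) : (0:ℝ) < (2:ℝ) ^ k := zpow_pos two_pos k

lemma weak_setLIntegral_le {α : Type*} [MeasurableSpace α] (μ : Measure α) {V : α → ℝ}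
    (hV : Measurable V) {q : ℝ} (hq : 1 < q) {N : ℝ≥0∞} (hN0 : N ≠ 0) (hNtop : N ≠ ∞)
    (hw : ∀ t : ℝ, 0 < t → μ {x | t < |V x|} ≤ (N / ENNReal.ofReal t) ^ q)
    {A : Set α} (hA : MeasurableSet A) :
    ∫⁻ x in A, ENNReal.ofReal |V x| ∂μ ≤
      ((1 - (2:ℝ≥0∞)⁻¹)⁻¹ + (1 - (2:ℝ≥0∞) ^ (1 - q))⁻¹) * (N * (μ A) ^ (1 - 1/q)) := by
  have hq0 : (0:ℝ) < q := lt_trans one_pos hq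
  set c₀ : ℝ≥0∞ := (1 - (2:ℝ≥0∞)⁻¹)⁻¹ + (1 - (2:ℝ≥0∞) ^ (1 - q))⁻¹ with hc₀
  set a := μ A with ha
  rcases eq_or_ne a 0 with ha0 | ha0
  · have : μ.restrict A = 0 := by
      rw [Measure.restrict_eq_zero]; exact ha0
    rw [this]; simp
  rcases eq_or_ne a ∞ with hatop | hatop
  · have : a ^ (1 - 1/q) = ∞ := by
      rw [hatop]
      exact ENNReal.top_rpow_of_pos (by rw [sub_pos]; exact (div_lt_one hq0).2 hq)
    have h1 : ((1:ℝ≥0∞) - 2⁻¹)⁻¹ ≠ 0 :=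
      ENNReal.inv_ne_zero.2 (ne_top_of_le_ne_top ENNReal.one_ne_top tsub_le_self)
    have hc₀0 : c₀ ≠ 0 := by
      rw [hc₀]
      intro h
      exact h1 (add_eq_zero.1 h).1
    rw [this, ENNReal.mul_top hN0, ENNReal.mul_top hc₀0]
    exact le_top
  -- main case : 0 < a < ∞
  have haR : 0 < a.toReal := ENNReal.toReal_pos ha0 hatop
  have hNR : 0 < N.toReal := ENNReal.toReal_pos hN0 hNtop
  set c : ℝ := N.toReal * a.toReal ^ (-(1/q)) with hc
  have hc0 : 0 < c := by positivity
  obtain ⟨k₀, hk₀⟩ := exists_mem_Ico_zpow hc0 one_lt_two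
  have hofc : ENNReal.ofReal c = N * a ^ (-(1/q)) := by
    rw [ENNReal.ofReal_mul hNR.le, ENNReal.ofReal_toReal hNtop,
      ← ENNReal.ofReal_rpow_of_pos haR, ENNReal.ofReal_toReal hatop]
  -- layer cake
  have lc : ∫⁻ x in A, ENNReal.ofReal |V x| ∂μ
      = ∫⁻ t in Ioi (0:ℝ), (μ.restrict A) {x | t < |V x|} :=
    lintegral_eq_lintegral_meas_lt _ (Filter.Eventually.of_forall fun x => abs_nonneg _)
      hV.abs.aemeasurable
  set g : ℝ → ℝ≥0∞ := fun t => (μ.restrict A) {x | t < |V x|} with hgdef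
  have hg : Antitone g := fun s t hst =>
    measure_mono (fun x hx => lt_of_le_of_lt hst hx)
  have hga : ∀ t : ℝ, g t ≤ a := by
    intro t
    calc g t ≤ μ.restrict A univ := measure_mono (subset_univ _)
      _ = a := by rw [Measure.restrict_apply_univ]
  have hgw : ∀ t : ℝ, 0 < t → g t ≤ (N / ENNReal.ofReal t) ^ q := by
    intro t ht
    exact le_trans (Measure.restrict_le_self _) (hw t ht)
  set f : ℤ → ℝ≥0∞ := fun k => ENNReal.ofReal ((2:ℝ) ^ (k+1) - 2 ^ k) * g ((2:ℝ) ^ k) with hf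
  have hfk : ∀ k : ℤ, f k = ENNReal.ofReal ((2:ℝ) ^ k) * g ((2:ℝ) ^ k) := by
    intro k
    have : (2:ℝ) ^ (k+1) - 2 ^ k = 2 ^ k := by
      rw [zpow_add_one₀ (two_ne_zero)]; ring
    rw [hf]; simp only [this]
  have hbound : ∫⁻ x in A, ENNReal.ofReal |V x| ∂μ ≤
      (∑' n : ℕ, f (k₀ - n)) + ∑' n : ℕ, f (k₀ + 1 + n) := by
    rw [lc]
    exact le_trans (dyadic_bound one_lt_two hg) (tsum_int_split f k₀)
  -- part 1
  have part1 : ∑' n : ℕ, f (k₀ - n) ≤ (N * a ^ (1 - 1/q)) * (1 - (2:ℝ≥0∞)⁻¹)⁻¹ := by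
    refine tsum_le_geometric fun n => ?_
    rw [hfk]
    have h2 : (2:ℝ) ^ (k₀ - (n:ℤ)) = 2 ^ k₀ * ((2:ℝ)⁻¹) ^ (n:ℕ) := by
      rw [zpow_sub₀ two_ne_zero, zpow_natCast, div_eq_mul_inv, inv_pow]
    calc ENNReal.ofReal ((2:ℝ) ^ (k₀ - (n:ℤ))) * g ((2:ℝ) ^ (k₀ - (n:ℤ)))
        ≤ ENNReal.ofReal ((2:ℝ) ^ k₀ * ((2:ℝ)⁻¹) ^ (n:ℕ)) * a := by
          rw [h2]; exact mul_le_mul_right (hga _) _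
      _ = ENNReal.ofReal ((2:ℝ) ^ k₀) * a * ((2:ℝ≥0∞)⁻¹) ^ (n:ℕ) := by
          rw [ENNReal.ofReal_mul (le_of_lt (ofReal_two_zpow_pos k₀)),
            ENNReal.ofReal_pow (by norm_num)]
          rw [ENNReal.ofReal_inv_of_pos two_pos, ENNReal.ofReal_ofNat]
          ring
      _ ≤ (N * a ^ (1 - 1/q)) * ((2:ℝ≥0∞)⁻¹) ^ (n:ℕ) := by
          refine mul_le_mul_left ?_ _
          calc ENNReal.ofReal ((2:ℝ) ^ k₀) * a ≤ ENNReal.ofReal c * a :=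
                mul_le_mul_left (ENNReal.ofReal_le_ofReal hk₀.1) _
            _ = N * a ^ (-(1/q)) * a := by rw [hofc]
            _ = N * a ^ (1 - 1/q) := by
                rw [mul_assoc]
                congr 1
                calc a ^ (-(1/q)) * a = a ^ (-(1/q)) * a ^ (1:ℝ) := by rw [ENNReal.rpow_one]
                  _ = a ^ (-(1/q) + 1) := (ENNReal.rpow_add _ _ ha0 hatop).symm
                  _ = a ^ (1 - 1/q) := by rw [show -(1/q) + 1 = 1 - 1/q by ring]
  -- part 2
  have part2 : ∑' n : ℕ, f (k₀ + 1 + n) ≤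
      (N * a ^ (1 - 1/q)) * (1 - (2:ℝ≥0∞) ^ (1 - q))⁻¹ := by
    refine tsum_le_geometric fun n => ?_
    rw [hfk]
    set t : ℝ := (2:ℝ) ^ (k₀ + 1 + (n:ℤ)) with htdef
    have ht : 0 < t := ofReal_two_zpow_pos _
    set x : ℝ≥0∞ := ENNReal.ofReal t with hx
    have hx0 : x ≠ 0 := (ENNReal.ofReal_pos.2 ht).ne'
    have hxtop : x ≠ ∞ := ENNReal.ofReal_ne_top
    have hgt : g t ≤ N ^ q * (x ^ q)⁻¹ := by
      calc g t ≤ (N / x) ^ q := hgw t ht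
        _ = (N * x⁻¹) ^ q := by rw [div_eq_mul_inv]
        _ = N ^ q * (x⁻¹) ^ q :=
            ENNReal.mul_rpow_of_ne_top hNtop (ENNReal.inv_ne_top.2 hx0) q
        _ = N ^ q * (x ^ q)⁻¹ := by rw [ENNReal.inv_rpow]
    have hxq : x * (x ^ q)⁻¹ = x ^ (1 - q) := by
      calc x * (x ^ q)⁻¹ = x ^ (1:ℝ) * x ^ (-q) := by
            rw [ENNReal.rpow_one, ENNReal.rpow_neg]
        _ = x ^ (1 + -q) := (ENNReal.rpow_add _ _ hx0 hxtop).symm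
        _ = x ^ (1 - q) := by rw [show (1:ℝ) + -q = 1 - q by ring]
    -- decompose x
    have hxsplit : x = ENNReal.ofReal ((2:ℝ) ^ (k₀+1)) * (2:ℝ≥0∞) ^ (n:ℕ) := by
      rw [hx, htdef]
      have : (2:ℝ) ^ (k₀ + 1 + (n:ℤ)) = (2:ℝ) ^ (k₀+1) * (2:ℝ) ^ (n:ℕ) := by
        rw [zpow_add₀ two_ne_zero, zpow_natCast]
      rw [this, ENNReal.ofReal_mul (le_of_lt (ofReal_two_zpow_pos _)),
        ENNReal.ofReal_pow (by norm_num), ENNReal.ofReal_ofNat]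
    set y : ℝ≥0∞ := ENNReal.ofReal ((2:ℝ) ^ (k₀+1)) with hy
    have hy0 : y ≠ 0 := (ENNReal.ofReal_pos.2 (ofReal_two_zpow_pos (k₀+1))).ne'
    have hpow : x ^ (1 - q) = y ^ (1-q) * ((2:ℝ≥0∞) ^ (1-q)) ^ (n:ℕ) := by
      rw [hxsplit, ENNReal.mul_rpow_of_ne_top ENNReal.ofReal_ne_top
        (by simp : ((2:ℝ≥0∞) ^ (n:ℕ)) ≠ ∞)]
      congr 1
      rw [← ENNReal.rpow_natCast (2:ℝ≥0∞) n, ← ENNReal.rpow_mul, mul_comm,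
        ENNReal.rpow_mul, ENNReal.rpow_natCast]
    have hyc : y ^ (1-q) ≤ (ENNReal.ofReal c) ^ (1-q) := by
      have hcy : ENNReal.ofReal c ≤ y := ENNReal.ofReal_le_ofReal hk₀.2.le
      have e1 : y ^ (1-q) = (y ^ (q-1))⁻¹ := by
        rw [show (1:ℝ) - q = -(q-1) by ring, ENNReal.rpow_neg]
      have e2 : (ENNReal.ofReal c) ^ (1-q) = ((ENNReal.ofReal c) ^ (q-1))⁻¹ := by
        rw [show (1:ℝ) - q = -(q-1) by ring, ENNReal.rpow_neg]
      rw [e1, e2]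
      exact ENNReal.inv_le_inv.2 (ENNReal.rpow_le_rpow hcy (by linarith))
    have hcval : (ENNReal.ofReal c) ^ (1-q) = N ^ (1-q) * a ^ ((1 - 1/q) - 1 + (1/q) * q - 1) ∨ True := Or.inr trivial
    have hcpow : (ENNReal.ofReal c) ^ (1-q) = N ^ (1-q) * a ^ ((q-1)/q) := by
      rw [hofc, ENNReal.mul_rpow_of_ne_top hNtop ?hfin]
      case hfin =>
        rw [ENNReal.rpow_neg]
        exact ENNReal.inv_ne_top.2 (by
          simp [ENNReal.rpow_eq_zero_iff, ha0, hatop])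
      congr 1
      rw [← ENNReal.rpow_mul]
      congr 1
      field_simp
      ring
    have hNq : N ^ q * N ^ (1-q) = N := by
      rw [← ENNReal.rpow_add _ _ hN0 hNtop]
      norm_num
    have hexp : (q-1)/q = 1 - 1/q := by field_simp
    calc x * g t ≤ x * (N ^ q * (x ^ q)⁻¹) := mul_le_mul_right hgt _
      _ = N ^ q * (x * (x ^ q)⁻¹) := by ring
      _ = N ^ q * x ^ (1-q) := by rw [hxq]
      _ = N ^ q * (y ^ (1-q) * ((2:ℝ≥0∞) ^ (1-q)) ^ (n:ℕ)) := by rw [hpow]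
      _ ≤ N ^ q * ((ENNReal.ofReal c) ^ (1-q) * ((2:ℝ≥0∞) ^ (1-q)) ^ (n:ℕ)) := by
          exact mul_le_mul_right (mul_le_mul_left hyc _) _
      _ = (N * a ^ (1 - 1/q)) * ((2:ℝ≥0∞) ^ (1-q)) ^ (n:ℕ) := by
          rw [hcpow, hexp, ← mul_assoc, ← mul_assoc, hNq]
  -- assemble
  calc ∫⁻ x in A, ENNReal.ofReal |V x| ∂μ
      ≤ (∑' n : ℕ, f (k₀ - n)) + ∑' n : ℕ, f (k₀ + 1 + n) := hbound
    _ ≤ (N * a ^ (1 - 1/q)) * (1 - (2:ℝ≥0∞)⁻¹)⁻¹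
        + (N * a ^ (1 - 1/q)) * (1 - (2:ℝ≥0∞) ^ (1 - q))⁻¹ := add_le_add part1 part2
    _ = c₀ * (N * a ^ (1 - 1/q)) := by rw [hc₀]; ring

noncomputable def ψ : ℝ → ℝ := fun r => Real.smoothTransition ((r^2 - 1)/3)

lemma ψ_contDiff : ContDiff ℝ (⊤:ℕ∞) ψ :=
  (Real.smoothTransition.contDiff (n := (⊤ : ℕ∞))).comp
    (ContDiff.div_const (by fun_prop) 3)

lemma ψ_zero {r : ℝ} (h : |r| ≤ 1) : ψ r = 0 := by
  apply Real.smoothTransition.zero_of_nonpos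
  have : r^2 ≤ 1 := by
    rw [← sq_abs]
    nlinarith [abs_nonneg r]
  linarith

lemma ψ_one {r : ℝ} (h : 2 ≤ |r|) : ψ r = 1 := by
  apply Real.smoothTransition.one_of_one_le
  have : (4:ℝ) ≤ r^2 := by
    rw [← sq_abs]
    nlinarith [abs_nonneg r]
  linarith

lemma deriv_ψ_eq_zero {r : ℝ} (h : |r| ≤ 1 ∨ 2 ≤ |r|) : deriv ψ r = 0 := by
  have hd : Continuous (deriv ψ) := (ψ_contDiff.continuous_deriv (by exact_mod_cast le_top))
  rcases h with h | h
  · have h1 : EqOn (deriv ψ) 0 {x : ℝ | |x| < 1} := by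
      intro x hx
      have hop : IsOpen {y : ℝ | |y| < 1} := isOpen_lt continuous_abs continuous_const
      have hev : ψ =ᶠ[nhds x] (fun _ => (0:ℝ)) := by
        filter_upwards [hop.mem_nhds hx] with y hy
        exact ψ_zero (le_of_lt hy)
      simp only [Pi.zero_apply]
      rw [hev.deriv_eq, deriv_const]
    have h2 : EqOn (deriv ψ) 0 (closure {x : ℝ | |x| < 1}) :=
      h1.closure hd continuous_const
    apply h2
    have : {x : ℝ | |x| < 1} = Metric.ball (0:ℝ) 1 := by
      ext y; simp [Real.dist_eq]
    rw [this, closure_ball (0:ℝ) one_ne_zero]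
    simp [Real.dist_eq, h]
  · have h1 : EqOn (deriv ψ) 0 {x : ℝ | 2 < |x|} := by
      intro x hx
      have hop : IsOpen {y : ℝ | 2 < |y|} := isOpen_lt continuous_const continuous_abs
      have hev : ψ =ᶠ[nhds x] (fun _ => (1:ℝ)) := by
        filter_upwards [hop.mem_nhds hx] with y hy
        exact ψ_one (le_of_lt hy)
      simp only [Pi.zero_apply]
      rw [hev.deriv_eq, deriv_const]
    have h2 : EqOn (deriv ψ) 0 (closure {x : ℝ | 2 < |x|}) :=
      h1.closure hd continuous_const
    apply h2
    have hset : {x : ℝ | 2 < |x|} = Iio (-2) ∪ Ioi 2 := by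
      ext y
      simp only [mem_setOf_eq, mem_union, mem_Iio, mem_Ioi, lt_abs]
      constructor
      · rintro (h' | h')
        · right; linarith
        · left; linarith
      · rintro (h' | h')
        · right; linarith
        · left; linarith
    rw [hset, closure_union, closure_Iio, closure_Ioi]
    rcases le_abs.mp h with h' | h'
    · right; exact h'
    · left; simp only [mem_Iic]; linarith

lemma exists_deriv_ψ_bound : ∃ K : ℝ, 0 ≤ K ∧ ∀ r, |deriv ψ r| ≤ K := by
  have hd : Continuous (deriv ψ) := ψ_contDiff.continuous_deriv (by exact_mod_cast le_top)
  have hsupp : HasCompactSupport (deriv ψ) := by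
    apply HasCompactSupport.intro (isCompact_Icc (a := (-2:ℝ)) (b := 2))
    intro x hx
    apply deriv_ψ_eq_zero
    right
    simp only [mem_Icc, not_and_or, not_le] at hx
    rcases hx with hx | hx
    · rw [abs_of_nonpos (by linarith)]; linarith
    · rw [abs_of_nonneg (by linarith)]; linarith
  obtain ⟨K, hK⟩ := hd.bounded_above_of_compact_support hsupp
  refine ⟨max K 0, le_max_right _ _, fun r => ?_⟩
  exact le_trans (by simpa [Real.norm_eq_abs] using hK r) (le_max_left _ _)

noncomputable def CS (d : ℕ) : ℝ≥0 :=
  eLpNormLESNormFDerivOfEqInnerConst (volume : Measure (EuclideanSpace ℝ (Fin d))) 2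

lemma trunc_estimate {d : ℕ} (hd : 3 ≤ d) {φ : EuclideanSpace ℝ (Fin d) → ℝ} (hφ : ContDiff ℝ (⊤:ℕ∞) φ)
    (hφc : HasCompactSupport φ) {K : ℝ} (hK0 : 0 ≤ K) (hK : ∀ r, |deriv ψ r| ≤ K)
    {t : ℝ} (ht : 0 < t) :
    volume {x : EuclideanSpace ℝ (Fin d) | 2*t < |φ x|} ^ (1 - 2/(d:ℝ)) * (ENNReal.ofReal t)^2
      ≤ ((CS d : ℝ≥0∞) * ENNReal.ofReal K)^2
        * ∫⁻ x in {x : EuclideanSpace ℝ (Fin d) | t < |φ x| ∧ |φ x| < 2*t}, (‖fderiv ℝ φ x‖₊ : ℝ≥0∞) ^ 2 := by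
  have hd3 : (3:ℝ) ≤ (d:ℝ) := by exact_mod_cast hd
  have hdpos : (0:ℝ) < d := by linarith
  have hd2 : (0:ℝ) < (d:ℝ) - 2 := by linarith
  -- the truncated function
  set g : ℝ → ℝ := fun y => t * ψ (y / t) with hg
  set u : EuclideanSpace ℝ (Fin d) → ℝ := fun x => g (φ x) with hu
  have hgC : ContDiff ℝ (⊤:ℕ∞) g :=
    contDiff_const.mul (ψ_contDiff.comp (contDiff_id.div_const t))
  have huC : ContDiff ℝ 1 u := by
    exact_mod_cast (hgC.comp (hφ.of_le (by exact_mod_cast le_top))).of_le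
      (by exact_mod_cast le_top)
  have huHC : HasCompactSupport u := by
    apply hφc.comp_left (g := g)
    simp only [hg]
    rw [zero_div, ψ_zero (by simp)]
    ring
  -- exponents
  set p' : ℝ≥0 := 2 * (d:ℝ≥0) / ((d:ℝ≥0) - 2) with hp'def
  have hcoed : ((d:ℝ≥0):ℝ) = (d:ℝ) := by norm_cast
  have hp'R : (p' : ℝ) = 2 * (d:ℝ) / ((d:ℝ) - 2) := by
    rw [hp'def, NNReal.coe_div, NNReal.coe_mul, NNReal.coe_sub (by
      simp only [← NNReal.coe_le_coe, hcoed]; norm_num; linarith)]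
    push_cast
    norm_num
  have hp'pos : (0:ℝ) < (p' : ℝ) := by rw [hp'R]; positivity
  have hp'0 : (p' : ℝ≥0∞) ≠ 0 := by
    simp only [ne_eq, ENNReal.coe_eq_zero]
    exact_mod_cast hp'pos.ne'
  have hp'top : (p' : ℝ≥0∞) ≠ ⊤ := ENNReal.coe_ne_top
  have hp'inv : ((p':ℝ))⁻¹ = ((2:ℝ≥0):ℝ)⁻¹ - ((Module.finrank ℝ (EuclideanSpace ℝ (Fin d)) : ℕ):ℝ)⁻¹ := by
    rw [hp'R, finrank_euclideanSpace_fin]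
    push_cast
    field_simp
  -- Sobolev inequality
  have sob := eLpNorm_le_eLpNorm_fderiv_of_eq_inner (volume : Measure (EuclideanSpace ℝ (Fin d))) huC huHC
    (p := 2) (p' := p') (by norm_num) (by rw [finrank_euclideanSpace_fin]; omega) hp'inv
  have rpow_two_eq : ∀ z : ℝ≥0∞, z ^ (2:ℝ) = z ^ (2:ℕ) := fun z => by
    rw [← ENNReal.rpow_natCast z 2]; norm_num
  set S : Set (EuclideanSpace ℝ (Fin d)) := {x | 2*t < |φ x|} with hS
  have huS : ∀ x ∈ S, u x = t := by
    intro x hx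
    rw [hu]
    simp only [hg]
    rw [ψ_one (by
      rw [abs_div, abs_of_pos ht, le_div_iff₀ ht]
      have : 2*t < |φ x| := hx
      linarith)]
    ring
  -- lower bound for eLpNorm u p'
  have hlow : ENNReal.ofReal t * (volume S) ^ (1/(p':ℝ)) ≤ eLpNorm u p' volume := by
    rw [eLpNorm_eq_lintegral_rpow_enorm_toReal hp'0 hp'top, ENNReal.coe_toReal]
    have h1 : (ENNReal.ofReal t)^(p':ℝ) * volume S
        ≤ ∫⁻ x, (‖u x‖₊ : ℝ≥0∞) ^ (p':ℝ) := by
      calc (ENNReal.ofReal t)^(p':ℝ) * volume S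
          = ∫⁻ _ in S, (ENNReal.ofReal t)^(p':ℝ) := (setLIntegral_const S _).symm
        _ ≤ ∫⁻ x in S, (‖u x‖₊ : ℝ≥0∞) ^ (p':ℝ) := by
            refine setLIntegral_mono' ?_ (fun x hx => ?_)
            · exact measurableSet_lt measurable_const hφ.continuous.abs.measurable
            · rw [huS x hx]; exact le_of_eq (congrArg (· ^ (p':ℝ)) (Real.enorm_eq_ofReal ht.le).symm)
        _ ≤ ∫⁻ x, (‖u x‖₊ : ℝ≥0∞) ^ (p':ℝ) := setLIntegral_le_lintegral _ _
    calc ENNReal.ofReal t * (volume S) ^ (1/(p':ℝ))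
        = ((ENNReal.ofReal t ^ (p':ℝ)) * volume S) ^ (1/(p':ℝ)) := by
          rw [ENNReal.mul_rpow_of_nonneg _ _ (by positivity), ← ENNReal.rpow_mul,
            mul_one_div, div_self hp'pos.ne', ENNReal.rpow_one]
      _ ≤ (∫⁻ x, (‖u x‖₊ : ℝ≥0∞) ^ (p':ℝ)) ^ (1/(p':ℝ)) :=
          ENNReal.rpow_le_rpow h1 (by positivity)
  -- derivative of u
  have hgd : ∀ y : ℝ, HasDerivAt g (deriv ψ (y/t)) y := by
    intro y
    have h1 : HasDerivAt (fun y : ℝ => y / t) (1/t) y := by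
      simpa using (hasDerivAt_id y).div_const t
    have h2 : HasDerivAt ψ (deriv ψ (y/t)) (y/t) :=
      ((ψ_contDiff.differentiable (by simp)) (y/t)).hasDerivAt
    have h4 := (h2.comp y h1).const_mul t
    have : t * (deriv ψ (y/t) * (1/t)) = deriv ψ (y/t) := by
      field_simp
    rw [this] at h4
    exact h4
  set w : EuclideanSpace ℝ (Fin d) → ℝ := fun x => deriv ψ (φ x / t) with hw
  have hfderiv : ∀ x, fderiv ℝ u x = w x • fderiv ℝ φ x := by
    intro x
    exact ((hgd (φ x)).comp_hasFDerivAt x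
      ((hφ.differentiable (by simp)) x).hasFDerivAt).fderiv
  set L : Set (EuclideanSpace ℝ (Fin d)) := {x | t < |φ x| ∧ |φ x| < 2*t} with hL
  have hLmeas : MeasurableSet L :=
    (measurableSet_lt measurable_const hφ.continuous.abs.measurable).inter
      (measurableSet_lt hφ.continuous.abs.measurable measurable_const)
  have hw0 : ∀ x, x ∉ L → w x = 0 := by
    intro x hx
    rw [hw]
    apply deriv_ψ_eq_zero
    rw [abs_div, abs_of_pos ht]
    simp only [hL, mem_setOf_eq, not_and_or, not_lt] at hx
    rcases hx with hx | hx
    · left; exact (div_le_one ht).2 hx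
    · right; rw [le_div_iff₀ ht]; linarith
  set I : ℝ≥0∞ := ∫⁻ x in L, (‖fderiv ℝ φ x‖₊ : ℝ≥0∞) ^ (2:ℕ) with hI
  have hDint : ∫⁻ x, (‖fderiv ℝ u x‖₊ : ℝ≥0∞) ^ (2:ℝ) ≤ (ENNReal.ofReal K)^(2:ℕ) * I := by
    have hptw : ∀ x, (‖fderiv ℝ u x‖₊ : ℝ≥0∞) ^ (2:ℝ)
        ≤ L.indicator (fun x => (ENNReal.ofReal K * (‖fderiv ℝ φ x‖₊:ℝ≥0∞)) ^ (2:ℝ)) x := by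
      intro x
      by_cases hx : x ∈ L
      · rw [indicator_of_mem hx]
        refine ENNReal.rpow_le_rpow ?_ (by norm_num)
        rw [hfderiv x]; change ‖w x • fderiv ℝ φ x‖ₑ ≤ ENNReal.ofReal K * ‖fderiv ℝ φ x‖ₑ; rw [← ofReal_norm, ← ofReal_norm,
          ← ENNReal.ofReal_mul hK0]
        apply ENNReal.ofReal_le_ofReal
        rw [norm_smul, Real.norm_eq_abs]
        exact mul_le_mul_of_nonneg_right (hK _) (norm_nonneg _)
      · rw [indicator_of_notMem hx, hfderiv x, hw0 x hx]
        simp only [zero_smul, nnnorm_zero, ENNReal.coe_zero]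
        rw [ENNReal.zero_rpow_of_pos (by norm_num)]
    calc ∫⁻ x, (‖fderiv ℝ u x‖₊ : ℝ≥0∞) ^ (2:ℝ)
        ≤ ∫⁻ x, L.indicator (fun x => (ENNReal.ofReal K * (‖fderiv ℝ φ x‖₊:ℝ≥0∞)) ^ (2:ℝ)) x :=
          lintegral_mono hptw
      _ = ∫⁻ x in L, (ENNReal.ofReal K * (‖fderiv ℝ φ x‖₊:ℝ≥0∞)) ^ (2:ℝ) :=
          lintegral_indicator hLmeas _
      _ = ∫⁻ x in L, (ENNReal.ofReal K)^(2:ℝ) * (‖fderiv ℝ φ x‖₊:ℝ≥0∞) ^ (2:ℝ) := by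
          congr 1
          ext x
          rw [ENNReal.mul_rpow_of_nonneg _ _ (by norm_num : (0:ℝ) ≤ 2)]
      _ = (ENNReal.ofReal K)^(2:ℕ) * I := by
          rw [lintegral_const_mul' _ _ (by
            rw [rpow_two_eq]
            exact ENNReal.pow_ne_top ENNReal.ofReal_ne_top), rpow_two_eq]
          congr 1
          rw [hI]
          congr 1
          ext x
          rw [rpow_two_eq]
  -- upper bound for eLpNorm of the derivative
  have hup : eLpNorm (fderiv ℝ u) 2 volume ≤ ((ENNReal.ofReal K)^(2:ℕ) * I) ^ ((1:ℝ)/2) := by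
    rw [eLpNorm_eq_lintegral_rpow_enorm_toReal (by norm_num) (by norm_num)]
    simp only [ENNReal.toReal_ofNat]
    exact ENNReal.rpow_le_rpow hDint (by norm_num)
  -- combine
  have hcomb : ENNReal.ofReal t * (volume S) ^ (1/(p':ℝ))
      ≤ (CS d : ℝ≥0∞) * ((ENNReal.ofReal K)^(2:ℕ) * I) ^ ((1:ℝ)/2) := by
    refine le_trans hlow (le_trans sob ?_)
    exact mul_le_mul_right hup _
  have hsq := mul_le_mul' hcomb hcomb
  have hLHS : (ENNReal.ofReal t * (volume S) ^ (1/(p':ℝ)))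
      * (ENNReal.ofReal t * (volume S) ^ (1/(p':ℝ)))
      = volume S ^ (1 - 2/(d:ℝ)) * (ENNReal.ofReal t)^(2:ℕ) := by
    have e1 : ((volume S) ^ (1/(p':ℝ))) * ((volume S) ^ (1/(p':ℝ)))
        = ((volume S) ^ (1/(p':ℝ))) ^ (2:ℕ) := by ring
    have e2 : ((volume S) ^ (1/(p':ℝ))) ^ (2:ℕ) = volume S ^ (1 - 2/(d:ℝ)) := by
      rw [← rpow_two_eq, ← ENNReal.rpow_mul]
      congr 1
      rw [hp'R]
      field_simp
    calc (ENNReal.ofReal t * (volume S) ^ (1/(p':ℝ)))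
        * (ENNReal.ofReal t * (volume S) ^ (1/(p':ℝ)))
        = (((volume S) ^ (1/(p':ℝ))) * ((volume S) ^ (1/(p':ℝ)))) * (ENNReal.ofReal t)^(2:ℕ) := by
          ring
      _ = volume S ^ (1 - 2/(d:ℝ)) * (ENNReal.ofReal t)^(2:ℕ) := by rw [e1, e2]
  have hRHS : ((CS d : ℝ≥0∞) * ((ENNReal.ofReal K)^(2:ℕ) * I) ^ ((1:ℝ)/2))
      * ((CS d : ℝ≥0∞) * ((ENNReal.ofReal K)^(2:ℕ) * I) ^ ((1:ℝ)/2))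
      = ((CS d : ℝ≥0∞) * ENNReal.ofReal K)^(2:ℕ) * I := by
    have e1 : (((ENNReal.ofReal K)^(2:ℕ) * I) ^ ((1:ℝ)/2)) * (((ENNReal.ofReal K)^(2:ℕ) * I) ^ ((1:ℝ)/2))
        = ((ENNReal.ofReal K)^(2:ℕ) * I) := by
      rw [show (((ENNReal.ofReal K)^(2:ℕ) * I) ^ ((1:ℝ)/2)) * (((ENNReal.ofReal K)^(2:ℕ) * I) ^ ((1:ℝ)/2))
        = (((ENNReal.ofReal K)^(2:ℕ) * I) ^ ((1:ℝ)/2))^(2:ℕ) by ring, ← rpow_two_eq,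
        ← ENNReal.rpow_mul]
      norm_num
    calc ((CS d : ℝ≥0∞) * ((ENNReal.ofReal K)^(2:ℕ) * I) ^ ((1:ℝ)/2))
        * ((CS d : ℝ≥0∞) * ((ENNReal.ofReal K)^(2:ℕ) * I) ^ ((1:ℝ)/2))
        = (CS d : ℝ≥0∞)^(2:ℕ) * ((((ENNReal.ofReal K)^(2:ℕ) * I) ^ ((1:ℝ)/2)) * (((ENNReal.ofReal K)^(2:ℕ) * I) ^ ((1:ℝ)/2))) := by
          ring
      _ = (CS d : ℝ≥0∞)^(2:ℕ) * ((ENNReal.ofReal K)^(2:ℕ) * I) := by rw [e1]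
      _ = ((CS d : ℝ≥0∞) * ENNReal.ofReal K)^(2:ℕ) * I := by ring
  rw [hLHS, hRHS] at hsq
  exact hsq

lemma layer_sum {d : ℕ} (hd : 3 ≤ d) {φ : EuclideanSpace ℝ (Fin d) → ℝ}
    (hφ : ContDiff ℝ (⊤:ℕ∞) φ) (hφc : HasCompactSupport φ)
    {K : ℝ} (hK0 : 0 ≤ K) (hK : ∀ r, |deriv ψ r| ≤ K) :
    ∫⁻ s in Ioi (0:ℝ), (volume {x : EuclideanSpace ℝ (Fin d) | s < (φ x)^2}) ^ (1 - 2/(d:ℝ))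
      ≤ (12:ℝ≥0∞) * ((CS d : ℝ≥0∞) * ENNReal.ofReal K)^2
        * ∫⁻ x, (‖fderiv ℝ φ x‖₊ : ℝ≥0∞) ^ 2 := by
  have hd3 : (3:ℝ) ≤ (d:ℝ) := by exact_mod_cast hd
  have hr0 : (0:ℝ) ≤ 1 - 2/(d:ℝ) := by
    rw [sub_nonneg, div_le_one (by linarith)]
    linarith
  set r : ℝ := 1 - 2/(d:ℝ) with hrdef
  set F : ℝ → ℝ≥0∞ :=
    fun s => (volume {x : EuclideanSpace ℝ (Fin d) | s < (φ x)^2}) ^ r with hF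
  have hFanti : Antitone F := by
    intro s₁ s₂ h
    exact ENNReal.rpow_le_rpow (measure_mono (fun x hx => lt_of_le_of_lt h hx)) hr0
  have h1 := dyadic_bound (b := 4) (by norm_num) hFanti
  -- identify F (4^k)
  have hzp : ∀ k : ℤ, (4:ℝ) ^ k = ((2:ℝ)^k)^2 := by
    intro k
    rw [show (4:ℝ) = 2*2 by norm_num, mul_zpow]
    ring
  have hFk : ∀ k : ℤ, F ((4:ℝ)^k)
      = (volume {x : EuclideanSpace ℝ (Fin d) | (2:ℝ)^k < |φ x|}) ^ r := by
    intro k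
    simp only [hF]
    have : {x : EuclideanSpace ℝ (Fin d) | (4:ℝ)^k < (φ x)^2}
        = {x : EuclideanSpace ℝ (Fin d) | (2:ℝ)^k < |φ x|} := by
      ext x
      simp only [mem_setOf_eq]
      rw [hzp k, ← sq_abs (φ x)]
      exact pow_lt_pow_iff_left₀ (le_of_lt (zpow_pos two_pos k)) (abs_nonneg _) two_ne_zero
    rw [this]
  set L : ℤ → Set (EuclideanSpace ℝ (Fin d)) :=
    fun k => {x | (2:ℝ)^k < |φ x| ∧ |φ x| < 2*(2:ℝ)^k} with hL
  have hLmeas : ∀ k, MeasurableSet (L k) := fun k =>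
    (measurableSet_lt measurable_const hφ.continuous.abs.measurable).inter
      (measurableSet_lt hφ.continuous.abs.measurable measurable_const)
  have hLdisj : Pairwise (Function.onFun Disjoint L) := by
    intro j k hjk
    rw [Function.onFun, Set.disjoint_left]
    rintro x ⟨hj1, hj2⟩ ⟨hk1, hk2⟩
    rcases lt_or_gt_of_ne hjk with h | h
    · have : (2:ℝ)^(j+1) ≤ (2:ℝ)^k := zpow_le_zpow_right₀ one_le_two (by omega)
      rw [zpow_add_one₀ two_ne_zero] at this
      nlinarith [zpow_pos (show (0:ℝ) < 2 by norm_num) j]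
    · have : (2:ℝ)^(k+1) ≤ (2:ℝ)^j := zpow_le_zpow_right₀ one_le_two (by omega)
      rw [zpow_add_one₀ two_ne_zero] at this
      nlinarith [zpow_pos (show (0:ℝ) < 2 by norm_num) k]
  set C₃ : ℝ≥0∞ := ((CS d : ℝ≥0∞) * ENNReal.ofReal K)^2 with hC₃
  -- bound each term after reindexing
  have hterm : ∀ k : ℤ, ENNReal.ofReal ((4:ℝ) ^ (k+1) - 4 ^ k) * F ((4:ℝ)^k)
      ≤ (fun k => (12:ℝ≥0∞) * C₃ * ∫⁻ x in L (k-1), (‖fderiv ℝ φ x‖₊ : ℝ≥0∞) ^ 2) k := by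
    intro k
    have h4 : (4:ℝ)^(k+1) - 4^k = 3 * 4^k := by
      rw [zpow_add_one₀ (by norm_num : (4:ℝ) ≠ 0)]
      ring
    have hofk : ENNReal.ofReal ((4:ℝ)^k) = (ENNReal.ofReal ((2:ℝ)^(k-1)))^2 * 4 := by
      rw [← ENNReal.ofReal_pow (le_of_lt (zpow_pos two_pos (k-1))), ← hzp (k-1)]
      rw [← ENNReal.ofReal_ofNat, ← ENNReal.ofReal_mul (le_of_lt (zpow_pos (by norm_num) (k-1)))]
      congr 1
      rw [show k = (k-1) + 1 by ring, zpow_add_one₀ (by norm_num : (4:ℝ) ≠ 0)]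
      ring_nf
    have htr := trunc_estimate hd hφ hφc hK0 hK (zpow_pos two_pos (k-1))
    have hset : {x : EuclideanSpace ℝ (Fin d) | 2*(2:ℝ)^(k-1) < |φ x|}
        = {x : EuclideanSpace ℝ (Fin d) | (2:ℝ)^k < |φ x|} := by
      ext x
      simp only [mem_setOf_eq]
      rw [show (2:ℝ)^k = 2*(2:ℝ)^(k-1) by
        rw [show k = (k-1)+1 by ring, zpow_add_one₀ two_ne_zero]; ring]
    rw [hset] at htr
    calc ENNReal.ofReal ((4:ℝ) ^ (k+1) - 4 ^ k) * F ((4:ℝ)^k)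
        = ENNReal.ofReal (3 * 4^k) * F ((4:ℝ)^k) := by rw [h4]
      _ = 3 * ((ENNReal.ofReal ((2:ℝ)^(k-1)))^2 * 4)
            * (volume {x : EuclideanSpace ℝ (Fin d) | (2:ℝ)^k < |φ x|}) ^ r := by
          rw [hFk, ENNReal.ofReal_mul (by norm_num), ← hofk]
          norm_num
      _ = 12 * ((volume {x : EuclideanSpace ℝ (Fin d) | (2:ℝ)^k < |φ x|}) ^ r
            * (ENNReal.ofReal ((2:ℝ)^(k-1)))^2) := by ring
      _ ≤ 12 * (C₃ * ∫⁻ x in L (k-1), (‖fderiv ℝ φ x‖₊ : ℝ≥0∞) ^ 2) := by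
          refine mul_le_mul_right ?_ _
          exact htr
      _ = (12:ℝ≥0∞) * C₃ * ∫⁻ x in L (k-1), (‖fderiv ℝ φ x‖₊ : ℝ≥0∞) ^ 2 := by ring
  have hsum : ∑' k : ℤ, ENNReal.ofReal ((4:ℝ) ^ (k+1) - 4 ^ k) * F ((4:ℝ)^k)
      ≤ (12:ℝ≥0∞) * C₃ * ∑' k : ℤ, ∫⁻ x in L (k-1), (‖fderiv ℝ φ x‖₊ : ℝ≥0∞) ^ 2 := by
    rw [← ENNReal.tsum_mul_left]
    exact ENNReal.tsum_le_tsum hterm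
  have hre : ∑' k : ℤ, ∫⁻ x in L (k-1), (‖fderiv ℝ φ x‖₊ : ℝ≥0∞) ^ 2
      = ∑' k : ℤ, ∫⁻ x in L k, (‖fderiv ℝ φ x‖₊ : ℝ≥0∞) ^ 2 := by
    exact (Equiv.subRight (1:ℤ)).tsum_eq
      (fun k => ∫⁻ x in L k, (‖fderiv ℝ φ x‖₊ : ℝ≥0∞) ^ 2)
  have hunion : ∑' k : ℤ, ∫⁻ x in L k, (‖fderiv ℝ φ x‖₊ : ℝ≥0∞) ^ 2
      ≤ ∫⁻ x, (‖fderiv ℝ φ x‖₊ : ℝ≥0∞) ^ 2 := by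
    rw [← lintegral_iUnion hLmeas hLdisj]
    exact setLIntegral_le_lintegral _ _
  calc ∫⁻ s in Ioi (0:ℝ), (volume {x : EuclideanSpace ℝ (Fin d) | s < (φ x)^2}) ^ r
      ≤ ∑' k : ℤ, ENNReal.ofReal ((4:ℝ) ^ (k+1) - 4 ^ k) * F ((4:ℝ)^k) := h1
    _ ≤ (12:ℝ≥0∞) * C₃ * ∑' k : ℤ, ∫⁻ x in L (k-1), (‖fderiv ℝ φ x‖₊ : ℝ≥0∞) ^ 2 := hsum
    _ ≤ (12:ℝ≥0∞) * C₃ * ∫⁻ x, (‖fderiv ℝ φ x‖₊ : ℝ≥0∞) ^ 2 := by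
        rw [hre]
        exact mul_le_mul_right hunion _

end WeakLhalf

open WeakLhalf Set ENNReal NNReal

/-- **Weak `L^{d/2}` potentials are form-bounded.**  Let `d ≥ 3`.  There is
`C = C(d) > 0`, independent of `V`, such that: whenever `V` is measurable with
weak-`L^{d/2}` quasinorm bound `t · |{|V| > t}|^{2/d} ≤ M` for all `t > 0`, one has
`∫ |V| φ² ≤ C M ∫ |∇φ|²` for all `φ ∈ C_c^∞(ℝ^d)`.  In particular every
weak-`L^{d/2}` potential is form-bounded with form-bound `δ = CM` and `c_δ = 0`. -/
theorem weak_Lhalfd_form_bounded (d : ℕ) (hd : 3 ≤ d) :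
    ∃ C : ℝ, 0 < C ∧
      ∀ (V : EuclideanSpace ℝ (Fin d) → ℝ), Measurable V →
      ∀ M : ℝ, 0 ≤ M →
      (∀ t : ℝ, 0 < t →
        ENNReal.ofReal t * (volume {x | t < |V x|}) ^ ((2 : ℝ) / d)
          ≤ ENNReal.ofReal M) →
      ∀ φ : EuclideanSpace ℝ (Fin d) → ℝ, ContDiff ℝ (⊤ : ℕ∞) φ → HasCompactSupport φ →
        ∫ x, |V x| * φ x ^ 2 ≤ C * M * ∫ x, ‖gradient φ x‖ ^ 2 := by
  obtain ⟨K, hK0, hK⟩ := exists_deriv_ψ_bound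
  have hd3 : (3:ℝ) ≤ (d:ℝ) := by exact_mod_cast hd
  have hdpos : (0:ℝ) < (d:ℝ) := by linarith
  set q : ℝ := (d:ℝ)/2 with hq
  have hq1 : 1 < q := by rw [hq]; linarith
  set c₀ : ℝ≥0∞ := (1 - (2:ℝ≥0∞)⁻¹)⁻¹ + (1 - (2:ℝ≥0∞) ^ (1 - q))⁻¹ with hc₀
  have hc₀top : c₀ ≠ ∞ := by
    rw [hc₀]
    apply ENNReal.add_ne_top.2
    constructor
    · rw [ENNReal.inv_ne_top]
      intro h
      rw [tsub_eq_zero_iff_le] at h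
      exact absurd (lt_of_le_of_lt h (ENNReal.inv_lt_one.2 one_lt_two)) (lt_irrefl _)
    · rw [ENNReal.inv_ne_top]
      intro h
      rw [tsub_eq_zero_iff_le] at h
      have : (2:ℝ≥0∞) ^ (1-q) < 1 :=
        ENNReal.rpow_lt_one_of_one_lt_of_neg one_lt_two (by rw [hq]; linarith)
      exact absurd (lt_of_le_of_lt h this) (lt_irrefl _)
  set 𝒦 : ℝ≥0∞ := c₀ * ((12:ℝ≥0∞) * ((CS d : ℝ≥0∞) * ENNReal.ofReal K)^2) with h𝒦
  have h𝒦top : 𝒦 ≠ ∞ := by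
    rw [h𝒦]
    apply ENNReal.mul_ne_top hc₀top
    apply ENNReal.mul_ne_top (by norm_num)
    apply ENNReal.pow_ne_top
    exact ENNReal.mul_ne_top ENNReal.coe_ne_top ENNReal.ofReal_ne_top
  refine ⟨𝒦.toReal + 1, by positivity, ?_⟩
  intro V hV M hM hweak φ hφ hφc
  -- basic facts about φ and its gradient
  have hφ' : ContDiff ℝ (⊤:ℕ∞) φ := hφ.of_le (by exact_mod_cast le_top)
  have hgrad : ∀ x, ‖gradient φ x‖ = ‖fderiv ℝ φ x‖ := fun x =>
    LinearIsometryEquiv.norm_map (InnerProductSpace.toDual ℝ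
      (EuclideanSpace ℝ (Fin d))).symm (fderiv ℝ φ x)
  have hfdcont : Continuous (fderiv ℝ φ) := hφ'.continuous_fderiv (by simp)
  have hgradsq_int : Integrable (fun x => ‖gradient φ x‖^2) volume := by
    apply Continuous.integrable_of_hasCompactSupport
    · have : Continuous (gradient φ) :=
        (InnerProductSpace.toDual ℝ (EuclideanSpace ℝ (Fin d))).symm.continuous.comp hfdcont
      exact (this.norm).pow 2
    · have h1 : HasCompactSupport (fderiv ℝ φ) := HasCompactSupport.fderiv ℝ hφc
      have := h1.comp_left
        (g := fun L : (EuclideanSpace ℝ (Fin d)) →L[ℝ] ℝ =>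
          ‖(InnerProductSpace.toDual ℝ (EuclideanSpace ℝ (Fin d))).symm L‖^2)
        (by simp)
      exact this
  set G : ℝ≥0∞ := ∫⁻ x, (‖fderiv ℝ φ x‖₊ : ℝ≥0∞) ^ 2 with hG
  have hGalt : ∀ x, (‖fderiv ℝ φ x‖₊ : ℝ≥0∞) ^ 2 = ENNReal.ofReal (‖gradient φ x‖^2) := by
    intro x
    rw [hgrad x, ENNReal.ofReal_pow (norm_nonneg _), ofReal_norm]; rfl
  have hRHSeq : ∫ x, ‖gradient φ x‖^2 = G.toReal := by
    rw [integral_eq_lintegral_of_nonneg_ae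
      (Filter.Eventually.of_forall (fun x => sq_nonneg _))
      hgradsq_int.aestronglyMeasurable]
    congr 1
    rw [hG]
    exact lintegral_congr fun x => (hGalt x).symm
  have hGtop : G ≠ ∞ := by
    have h2 := hgradsq_int.hasFiniteIntegral
    rw [hasFiniteIntegral_iff_norm] at h2
    have hGeq : G = ∫⁻ x, ENNReal.ofReal ‖(‖gradient φ x‖^2)‖ := by
      rw [hG]
      apply lintegral_congr
      intro x
      rw [hGalt x, Real.norm_of_nonneg (sq_nonneg _)]
    rw [hGeq]
    exact h2.ne
  have hLHSeq : ∫ x, |V x| * φ x ^ 2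
      = (∫⁻ x, ENNReal.ofReal (|V x| * φ x ^ 2)).toReal := by
    apply integral_eq_lintegral_of_nonneg_ae
    · exact Filter.Eventually.of_forall fun x => mul_nonneg (abs_nonneg _) (sq_nonneg _)
    · exact ((hV.abs.mul ((hφ.continuous.pow 2).measurable)).aestronglyMeasurable)
  rcases eq_or_lt_of_le hM with hM0 | hM0
  · -- M = 0 : V vanishes a.e.
    have hVnull : volume {x : EuclideanSpace ℝ (Fin d) | 0 < |V x|} = 0 := by
      have hnull : ∀ n : ℕ, volume {x : EuclideanSpace ℝ (Fin d) | 1/((n:ℝ)+1) < |V x|} = 0 := by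
        intro n
        have ht : (0:ℝ) < 1/((n:ℝ)+1) := by positivity
        have := hweak _ ht
        rw [← hM0] at this
        simp only [ENNReal.ofReal_zero, le_zero_iff, mul_eq_zero] at this
        rcases this with h | h
        · rw [ENNReal.ofReal_eq_zero] at h
          linarith
        · rcases (ENNReal.rpow_eq_zero_iff).1 h with ⟨h1, _⟩ | ⟨_, h2⟩
          · exact h1
          · exact absurd h2 (not_lt.2 (by positivity))
      have hsub : {x : EuclideanSpace ℝ (Fin d) | 0 < |V x|}
          ⊆ ⋃ n : ℕ, {x : EuclideanSpace ℝ (Fin d) | 1/((n:ℝ)+1) < |V x|} := by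
        intro x hx
        obtain ⟨n, hn⟩ := exists_nat_one_div_lt (show 0 < |V x| from hx)
        exact mem_iUnion.2 ⟨n, hn⟩
      exact measure_mono_null hsub (measure_iUnion_null hnull)
    have haezero : ∀ᵐ x, |V x| * φ x ^ 2 = 0 := by
      rw [ae_iff]
      apply measure_mono_null _ hVnull
      intro x hx
      simp only [mem_setOf_eq] at hx ⊢
      rcases lt_or_eq_of_le (abs_nonneg (V x)) with h | h
      · exact h
      · exact absurd (by rw [← h, zero_mul]) hx
    have hzero : (∫⁻ x, ENNReal.ofReal (|V x| * φ x ^ 2)) = 0 := by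
      have h0 : (fun x => ENNReal.ofReal (|V x| * φ x ^ 2)) =ᵐ[volume] (fun _ => 0) := by
        filter_upwards [haezero] with x hx
        simp [hx]
      rw [lintegral_congr_ae h0, lintegral_zero]
    rw [hLHSeq, hzero, ← hM0]
    simp
  · -- main case M > 0
    set N : ℝ≥0∞ := ENNReal.ofReal M with hN
    have hN0 : N ≠ 0 := by simp [hN, ENNReal.ofReal_eq_zero, not_le, hM0]
    have hNtop : N ≠ ∞ := ENNReal.ofReal_ne_top
    have hw' : ∀ t : ℝ, 0 < t →
        volume {x : EuclideanSpace ℝ (Fin d) | t < |V x|} ≤ (N / ENNReal.ofReal t) ^ q := by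
      intro t ht
      set w := volume {x : EuclideanSpace ℝ (Fin d) | t < |V x|} with hwdef
      have h1 : w ^ ((2:ℝ)/d) ≤ N / ENNReal.ofReal t := by
        rw [ENNReal.le_div_iff_mul_le (Or.inl (by simp [ENNReal.ofReal_eq_zero, not_le, ht]))
          (Or.inl ENNReal.ofReal_ne_top), mul_comm]
        exact hweak t ht
      calc w = (w ^ ((2:ℝ)/d)) ^ q := by
            rw [← ENNReal.rpow_mul]
            rw [show (2:ℝ)/(d:ℝ) * q = 1 by rw [hq]; field_simp]
            exact (ENNReal.rpow_one w).symm
        _ ≤ (N / ENNReal.ofReal t) ^ q := ENNReal.rpow_le_rpow h1 (by rw [hq]; positivity)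
    -- the exponent
    have hexp : 1 - 1/q = 1 - 2/(d:ℝ) := by
      rw [hq, one_div_div]
    -- chain of inequalities in ℝ≥0∞
    have hkey : ∫⁻ x, ENNReal.ofReal (|V x| * φ x ^ 2) ≤ 𝒦 * N * G := by
      have hVmeas : Measurable fun x : EuclideanSpace ℝ (Fin d) => ENNReal.ofReal (|V x|) :=
        hV.abs.ennreal_ofReal
      have hφ2meas : Measurable fun x : EuclideanSpace ℝ (Fin d) => ENNReal.ofReal ((φ x)^2) :=
        ((hφ.continuous.pow 2).measurable).ennreal_ofReal
      set ν : Measure (EuclideanSpace ℝ (Fin d)) :=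
        volume.withDensity (fun x => ENNReal.ofReal (|V x|)) with hν
      have step1 : ∫⁻ x, ENNReal.ofReal (|V x| * φ x ^ 2)
          = ∫⁻ x, ENNReal.ofReal ((φ x)^2) ∂ν := by
        rw [hν, lintegral_withDensity_eq_lintegral_mul volume hVmeas hφ2meas]
        apply lintegral_congr
        intro x
        simp only [Pi.mul_apply]
        rw [← ENNReal.ofReal_mul (abs_nonneg _)]
      have step2 : ∫⁻ x, ENNReal.ofReal ((φ x)^2) ∂ν
          = ∫⁻ s in Ioi (0:ℝ), ν {x | s < (φ x)^2} :=
        lintegral_eq_lintegral_meas_lt ν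
          (Filter.Eventually.of_forall fun x => sq_nonneg _)
          ((hφ.continuous.pow 2).measurable).aemeasurable
      have step3 : ∫⁻ s in Ioi (0:ℝ), ν {x | s < (φ x)^2}
          ≤ ∫⁻ s in Ioi (0:ℝ),
            c₀ * (N * (volume {x : EuclideanSpace ℝ (Fin d) | s < (φ x)^2}) ^ (1 - 2/(d:ℝ))) := by
        refine lintegral_mono fun s => ?_
        show ν {x : EuclideanSpace ℝ (Fin d) | s < (φ x)^2}
          ≤ c₀ * (N * (volume {x : EuclideanSpace ℝ (Fin d) | s < (φ x)^2}) ^ (1 - 2/(d:ℝ)))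
        have hmeas : MeasurableSet {x : EuclideanSpace ℝ (Fin d) | s < (φ x)^2} :=
          measurableSet_lt measurable_const ((hφ.continuous.pow 2).measurable)
        rw [hν, withDensity_apply _ hmeas, ← hexp]
        exact weak_setLIntegral_le volume hV hq1 hN0 hNtop hw' hmeas
      have step4 : ∫⁻ s in Ioi (0:ℝ),
            c₀ * (N * (volume {x : EuclideanSpace ℝ (Fin d) | s < (φ x)^2}) ^ (1 - 2/(d:ℝ)))
          = c₀ * N * ∫⁻ s in Ioi (0:ℝ),
            (volume {x : EuclideanSpace ℝ (Fin d) | s < (φ x)^2}) ^ (1 - 2/(d:ℝ)) := by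
        rw [← lintegral_const_mul' _ _ (ENNReal.mul_ne_top hc₀top hNtop)]
        apply lintegral_congr
        intro s
        ring
      have step5 := layer_sum hd hφ' hφc hK0 hK
      calc ∫⁻ x, ENNReal.ofReal (|V x| * φ x ^ 2)
          = ∫⁻ s in Ioi (0:ℝ), ν {x | s < (φ x)^2} := by rw [step1, step2]
        _ ≤ c₀ * N * ∫⁻ s in Ioi (0:ℝ),
            (volume {x : EuclideanSpace ℝ (Fin d) | s < (φ x)^2}) ^ (1 - 2/(d:ℝ)) := by
            rw [← step4]; exact step3
        _ ≤ c₀ * N * ((12:ℝ≥0∞) * ((CS d : ℝ≥0∞) * ENNReal.ofReal K)^2 * G) :=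
            mul_le_mul_right step5 _
        _ = 𝒦 * N * G := by rw [h𝒦]; ring
    -- convert to real integrals
    rw [hLHSeq, hRHSeq]
    have hfin : 𝒦 * N * G ≠ ∞ :=
      ENNReal.mul_ne_top (ENNReal.mul_ne_top h𝒦top hNtop) hGtop
    calc (∫⁻ x, ENNReal.ofReal (|V x| * φ x ^ 2)).toReal
        ≤ (𝒦 * N * G).toReal := ENNReal.toReal_mono hfin hkey
      _ = 𝒦.toReal * M * G.toReal := by
          rw [ENNReal.toReal_mul, ENNReal.toReal_mul, hN, ENNReal.toReal_ofReal hM]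
      _ ≤ (𝒦.toReal + 1) * M * G.toReal := by
          have h1 : (0:ℝ) ≤ M := hM
          have h2 : (0:ℝ) ≤ G.toReal := ENNReal.toReal_nonneg
          nlinarith [ENNReal.toReal_nonneg (a := 𝒦)]
end
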